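/- arXiv:2410.07870 — 3 statements merged into one kernel-verified Lean document; each statement's English description precedes it below -/
import Mathlib

section
/- Let f = (1/N)∑_{i=1}^N f_i with each f_i : R^d → R differentiable, and let the batch gradient estimator with batch size K be ∇̃_K(x) = (1/K)∑_{i∈B} ∇f_i(x) where B is drawn uniformly among subsets of {1,...,N} of size K. Then for every x, ‖∇f(x)‖² = (K/N)·E[‖∇̃_K(x)‖²] + (2/N²)·((N−K)/(N−1))·∑_{1≤i<j≤N} ⟨∇f_i(x), ∇f_j(x)⟩. -/
/-!
Expanding `‖∑ i ∈ B, vᵢ‖²` into inner products and exchanging the sum over batches `B` with the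
double sum over indices, each `⟪vᵢ, vⱼ⟫` gets weighted by the number of `K`-subsets containing
`{i, j}`. Both weights, `C(N-1, K-1)` on the diagonal and `C(N-2, K-2)` off it, come from
`#{B ⊇ s} · N^{(#s)} = C(N, K) · K^{(#s)}` (falling factorials), which needs no case split on `K`.
What remains is the expansion `‖∑ vᵢ‖² = ∑ ‖vᵢ‖² + 2 ∑_{i<j} ⟪vᵢ, vⱼ⟫` and field arithmetic.
-/

open Finset RealInnerProductSpace

theorem card_filter_powersetCard_subset_mul_descFactorial {α : Type*} [DecidableEq α]
    {s u : Finset α} (hsu : s ⊆ u) (K : ℕ) :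
    #{B ∈ powersetCard K u | s ⊆ B} * (#u).descFactorial #s
      = (#u).choose K * K.descFactorial #s := by
  by_cases hsK : #s ≤ K
  · rw [card_filter_powersetCard_subset s u K hsu hsK, Nat.descFactorial_eq_factorial_mul_choose,
      Nat.descFactorial_eq_factorial_mul_choose, mul_left_comm ((#u).choose K),
      Nat.choose_mul hsK]
    ring
  · rw [Nat.descFactorial_eq_zero_iff_lt.2 (not_le.1 hsK), mul_zero, mul_eq_zero, card_eq_zero,
      filter_eq_empty_iff]
    refine .inl fun B hB hsB => ?_
    exact hsK ((card_le_card hsB).trans (mem_powersetCard.1 hB).2.le)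

theorem sum_sum_mem_sum_mem_eq_sum_sum_card_smul {ι M : Type*} [Fintype ι] [DecidableEq ι]
    [AddCommMonoid M] (𝒜 : Finset (Finset ι)) (t : ι → ι → M) :
    ∑ B ∈ 𝒜, ∑ i ∈ B, ∑ j ∈ B, t i j = ∑ i, ∑ j, #{B ∈ 𝒜 | i ∈ B ∧ j ∈ B} • t i j := by
  simp_rw [card_filter, sum_smul, ite_smul, one_smul, zero_smul]
  conv_rhs => enter [2, i]; rw [sum_comm]
  rw [sum_comm]
  refine sum_congr rfl fun B _ => ?_
  simp only [ite_and, sum_ite_irrel, sum_const_zero, ← sum_filter, filter_mem_eq_inter,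
    univ_inter]

section InnerProductSpace

variable {ι E : Type*} [NormedAddCommGroup E] [InnerProductSpace ℝ E]

theorem norm_sum_sq_eq_sum_sum_inner (s : Finset ι) (v : ι → E) :
    ‖∑ i ∈ s, v i‖ ^ 2 = ∑ i ∈ s, ∑ j ∈ s, ⟪v i, v j⟫ := by
  rw [← real_inner_self_eq_norm_sq, sum_inner]
  simp only [inner_sum]

theorem norm_sum_sq_eq_sum_norm_sq_add_two_mul_sum_Ioi [Fintype ι] [LinearOrder ι]
    [LocallyFiniteOrderTop ι] [LocallyFiniteOrderBot ι] (v : ι → E) :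
    ‖∑ i, v i‖ ^ 2 = ∑ i, ‖v i‖ ^ 2 + 2 * ∑ i, ∑ j ∈ Ioi i, ⟪v i, v j⟫ := by
  classical
  have hsplit : ∀ i, ∑ j, ⟪v i, v j⟫ = ‖v i‖ ^ 2 + ∑ j ∈ {i}ᶜ, ⟪v j, v i⟫ := fun i => by
    rw [Fintype.sum_eq_add_sum_compl i, real_inner_self_eq_norm_sq]
    simp only [real_inner_comm (v i)]
  rw [norm_sum_sq_eq_sum_sum_inner, sum_congr rfl fun i _ => hsplit i, sum_add_distrib,
    ← sum_sum_Ioi_add_eq_sum_sum_off_diag, mul_sum]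
  simp only [real_inner_comm (v _) (v _), mul_sum, two_mul]

variable [Fintype ι] [DecidableEq ι]

theorem card_filter_mem_and_mem_powersetCard_mul (K : ℕ) (i j : ι) :
    (#{B ∈ powersetCard K univ | i ∈ B ∧ j ∈ B} : ℝ) * (Fintype.card ι * (Fintype.card ι - 1))
      = (Fintype.card ι).choose K * K * (if i = j then (Fintype.card ι : ℝ) - 1 else K - 1) := by
  split_ifs with hij
  · subst hij
    have h := card_filter_powersetCard_subset_mul_descFactorial (subset_univ {i}) K
    simp only [singleton_subset_iff, card_singleton, Nat.descFactorial_one, card_univ] at h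
    simp only [and_self]
    rw [← mul_assoc]
    exact_mod_cast congrArg (fun n : ℕ => (n : ℝ) * (Fintype.card ι - 1)) h
  · have h := card_filter_powersetCard_subset_mul_descFactorial (subset_univ {i, j}) K
    rw [card_pair hij] at h
    simp only [insert_subset_iff, singleton_subset_iff, card_univ] at h
    have h' := congrArg (Nat.cast : ℕ → ℝ) h
    push_cast [Nat.cast_descFactorial_two] at h'
    rw [h', mul_assoc]

theorem card_mul_sub_one_mul_sum_powersetCard_norm_sum_sq (v : ι → E) (K : ℕ) :
    (Fintype.card ι * (Fintype.card ι - 1) : ℝ) * ∑ B ∈ powersetCard K univ, ‖∑ i ∈ B, v i‖ ^ 2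
      = (Fintype.card ι).choose K * K *
          ((Fintype.card ι - K) * ∑ i, ‖v i‖ ^ 2 + (K - 1) * ‖∑ i, v i‖ ^ 2) := by
  have hweight : ∀ i j, (#{B ∈ powersetCard K univ | i ∈ B ∧ j ∈ B} : ℝ) * ⟪v i, v j⟫
      * (Fintype.card ι * (Fintype.card ι - 1))
      = (Fintype.card ι).choose K * K * ((K - 1) * ⟪v i, v j⟫
          + if i = j then (Fintype.card ι - K) * ‖v i‖ ^ 2 else 0) := fun i j => by
    rw [mul_right_comm, card_filter_mem_and_mem_powersetCard_mul]
    split_ifs with hij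
    · rw [hij, real_inner_self_eq_norm_sq]; ring
    · ring
  simp only [norm_sum_sq_eq_sum_sum_inner, sum_sum_mem_sum_mem_eq_sum_sum_card_smul, nsmul_eq_mul,
    mul_comm _ (∑ i, _), sum_mul, hweight, ← mul_sum, sum_add_distrib, sum_ite_eq, mem_univ,
    if_true]
  ring

end InnerProductSpace

theorem gradient_const_mul_sum {ι F : Type*} [NormedAddCommGroup F] [InnerProductSpace ℝ F]
    [CompleteSpace F] (s : Finset ι) (c : ℝ) {f : ι → F → ℝ} {x : F}
    (hf : ∀ i ∈ s, DifferentiableAt ℝ (f i) x) :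
    gradient (fun y => c * ∑ i ∈ s, f i y) x = c • ∑ i ∈ s, gradient (f i) x := by
  simp only [gradient, fderiv_const_mul (DifferentiableAt.fun_sum hf), fderiv_fun_sum hf,
    map_smul, map_sum]

/-- Decomposition of `‖∇f(x)‖²` into the expected squared norm of the batch gradient
estimator of size `K` and the average gradient correlation term. -/
theorem stmt1 {d N : ℕ} (hN : 2 ≤ N) (K : ℕ) (hK1 : 1 ≤ K) (hKN : K ≤ N)
    (f : Fin N → EuclideanSpace ℝ (Fin d) → ℝ)
    (hdiff : ∀ i, Differentiable ℝ (f i))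
    (x : EuclideanSpace ℝ (Fin d)) :
    ‖gradient (fun y => (N : ℝ)⁻¹ * ∑ i, f i y) x‖ ^ 2 =
      ((K : ℝ) / N) * (((N.choose K : ℝ))⁻¹ *
        ∑ B ∈ Finset.powersetCard K (Finset.univ : Finset (Fin N)),
          ‖(K : ℝ)⁻¹ • ∑ i ∈ B, gradient (f i) x‖ ^ 2)
      + (2 / (N : ℝ) ^ 2) * (((N : ℝ) - K) / ((N : ℝ) - 1)) *
        ∑ i : Fin N, ∑ j ∈ Finset.univ.filter (fun j => i < j),
          ⟪gradient (f i) x, gradient (f j) x⟫ := by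
  rw [gradient_const_mul_sum _ _ fun i _ => (hdiff i).differentiableAt]
  have hsample := card_mul_sub_one_mul_sum_powersetCard_norm_sum_sq (fun i => gradient (f i) x) K
  have hexpand := norm_sum_sq_eq_sum_norm_sq_add_two_mul_sum_Ioi fun i => gradient (f i) x
  rw [Fintype.card_fin] at hsample
  have hN0 : (N : ℝ) ≠ 0 := by exact_mod_cast (by omega : N ≠ 0)
  have hN1 : (N : ℝ) - 1 ≠ 0 := by
    rw [sub_ne_zero]; exact_mod_cast (by omega : N ≠ 1)
  have hK : (K : ℝ) ≠ 0 := by exact_mod_cast (by omega : K ≠ 0)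
  have hC : (N.choose K : ℝ) ≠ 0 := by exact_mod_cast (Nat.choose_pos hKN).ne'
  simp only [norm_smul, mul_pow, norm_inv, Real.norm_natCast, ← mul_sum, filter_lt_eq_Ioi]
  field_simp
  linear_combination (K * N.choose K * (N - K) : ℝ) * hexpand - hsample
end

section
/- Let f = (1/N)∑_{i=1}^N f_i with each f_i differentiable. Suppose the RACOGA condition holds with constant c > −1/2: for all x not in the set where all ∇f_i(x) vanish, ∑_{1≤i<j≤N} ⟨∇f_i(x), ∇f_j(x)⟩ ≥ c · ∑_{i=1}^N ‖∇f_i(x)‖². Then for batch size 1, the strong growth condition holds with constant N/(1+2c), i.e. (1/N)∑_{i=1}^N ‖∇f_i(x)‖² ≤ (N/(1+2c))·‖∇f(x)‖² for all x. -/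
/-!
Expanding `‖∑ i, ∇fᵢ x‖²` into the squared norms plus twice the pairwise inner products, the
RACOGA condition gives `(1 + 2c) ∑ i, ‖∇fᵢ x‖² ≤ ‖∑ i, ∇fᵢ x‖²`; since `∇f x = N⁻¹ • ∑ i, ∇fᵢ x`,
dividing by `1 + 2c > 0` and by `N` gives the strong growth inequality.
-/

open Finset RealInnerProductSpace

section Gradient

variable {F : Type*} [NormedAddCommGroup F] [InnerProductSpace ℝ F] [CompleteSpace F] {x : F}

theorem HasGradientAt.fun_sum {ι : Type*} {s : Finset ι} {f : ι → F → ℝ} {f' : ι → F}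
    (h : ∀ i ∈ s, HasGradientAt (f i) (f' i) x) :
    HasGradientAt (fun y => ∑ i ∈ s, f i y) (∑ i ∈ s, f' i) x := by
  rw [hasGradientAt_iff_hasFDerivAt, map_sum]
  exact HasFDerivAt.fun_sum fun i hi => (h i hi).hasFDerivAt

theorem HasGradientAt.const_mul {f : F → ℝ} {f' : F} (h : HasGradientAt f f' x) (a : ℝ) :
    HasGradientAt (fun y => a * f y) (a • f') x := by
  rw [hasGradientAt_iff_hasFDerivAt, map_smul]
  exact h.hasFDerivAt.const_mul a

end Gradient

theorem Finset.sum_sum_eq_sum_add_two_mul_sum_sum_lt {ι R : Type*} [Fintype ι] [LinearOrder ι]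
    [CommSemiring R] (a : ι → ι → R) (ha : ∀ i j, a i j = a j i) :
    ∑ i, ∑ j, a i j = ∑ i, a i i + 2 * ∑ i, ∑ j ∈ univ.filter (fun j => i < j), a i j := by
  have split : ∀ i j, a i j = (if j < i then a i j else 0) + (if i = j then a i j else 0)
      + (if i < j then a i j else 0) := by
    intro i j
    rcases lt_trichotomy i j with h | rfl | h
    · simp [h, h.not_gt, h.ne]
    · simp
    · simp [h, h.not_gt, h.ne']
  have lower : ∑ i, ∑ j ∈ univ.filter (fun j => j < i), a i j
      = ∑ i, ∑ j ∈ univ.filter (fun j => i < j), a i j := by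
    rw [sum_comm' (t' := univ) (s' := fun j => univ.filter (fun i => j < i))
      (fun i j => by simp)]
    simp_rw [ha]
  conv_lhs => enter [2, i, 2, j]; rw [split i j]
  simp only [sum_add_distrib, sum_ite_eq, mem_univ, if_true, ← sum_filter, lower]
  ring

theorem norm_sum_sq_eq_sum_norm_sq_add_two_mul_sum_inner_lt {ι E : Type*} [Fintype ι]
    [LinearOrder ι] [NormedAddCommGroup E] [InnerProductSpace ℝ E] (g : ι → E) :
    ‖∑ i, g i‖ ^ 2 = ∑ i, ‖g i‖ ^ 2 + 2 * ∑ i, ∑ j ∈ univ.filter (fun j => i < j), ⟪g i, g j⟫ := by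
  rw [← real_inner_self_eq_norm_sq, sum_inner]
  simp_rw [inner_sum, ← real_inner_self_eq_norm_sq]
  exact Finset.sum_sum_eq_sum_add_two_mul_sum_sum_lt _ fun i j => real_inner_comm _ _

theorem one_add_two_mul_mul_sum_norm_sq_le_norm_sum_sq {ι E : Type*} [Fintype ι]
    [LinearOrder ι] [NormedAddCommGroup E] [InnerProductSpace ℝ E] (g : ι → E) (c : ℝ)
    (hracoga : (∃ i, g i ≠ 0) →
      c * ∑ i, ‖g i‖ ^ 2 ≤ ∑ i, ∑ j ∈ univ.filter (fun j => i < j), ⟪g i, g j⟫) :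
    (1 + 2 * c) * ∑ i, ‖g i‖ ^ 2 ≤ ‖∑ i, g i‖ ^ 2 := by
  by_cases hg : ∃ i, g i ≠ 0
  · rw [norm_sum_sq_eq_sum_norm_sq_add_two_mul_sum_inner_lt]
    linarith [hracoga hg]
  · push Not at hg
    simp [hg]

theorem stmt3_general {d N : ℕ}
    (f : Fin N → EuclideanSpace ℝ (Fin d) → ℝ)
    (hdiff : ∀ i, Differentiable ℝ (f i))
    (c : ℝ) (hc : -(1 / 2 : ℝ) < c)
    (hracoga : ∀ x : EuclideanSpace ℝ (Fin d), (∃ i, gradient (f i) x ≠ 0) →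
      c * ∑ i : Fin N, ‖gradient (f i) x‖ ^ 2 ≤
        ∑ i : Fin N, ∑ j ∈ Finset.univ.filter (fun j => i < j),
          ⟪gradient (f i) x, gradient (f j) x⟫) :
    ∀ x : EuclideanSpace ℝ (Fin d),
      (N : ℝ)⁻¹ * ∑ i : Fin N, ‖gradient (f i) x‖ ^ 2
        ≤ ((N : ℝ) / (1 + 2 * c)) *
          ‖gradient (fun y => (N : ℝ)⁻¹ * ∑ i, f i y) x‖ ^ 2 := by
  intro x
  have hgrad : gradient (fun y => (N : ℝ)⁻¹ * ∑ i, f i y) x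
      = (N : ℝ)⁻¹ • ∑ i, gradient (f i) x :=
    ((HasGradientAt.fun_sum fun i _ => (hdiff i x).hasGradientAt).const_mul _).gradient
  have key := one_add_two_mul_mul_sum_norm_sq_le_norm_sum_sq _ c (hracoga x)
  have hc' : 0 < 1 + 2 * c := by linarith
  -- also for `N = 0`, where `0⁻¹ = 0`
  have hN_inv : (N : ℝ) * (N : ℝ)⁻¹ ^ 2 = (N : ℝ)⁻¹ := by
    rcases eq_or_ne (N : ℝ) 0 with h | h <;> field_simp [h]
  rw [hgrad, norm_smul, mul_pow, Real.norm_eq_abs, sq_abs]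
  calc (N : ℝ)⁻¹ * ∑ i, ‖gradient (f i) x‖ ^ 2
      ≤ (N : ℝ)⁻¹ * (‖∑ i, gradient (f i) x‖ ^ 2 / (1 + 2 * c)) := by
        gcongr
        rwa [le_div_iff₀' hc']
    _ = (N : ℝ) / (1 + 2 * c) * ((N : ℝ)⁻¹ ^ 2 * ‖∑ i, gradient (f i) x‖ ^ 2) := by
        rw [div_mul_eq_mul_div, ← mul_assoc, hN_inv, mul_div_assoc]

/-- Under the RACOGA condition with constant `c > -1/2`, the finite sum
`f = (1/N) ∑ fᵢ` satisfies the strong growth condition with constant `N/(1+2c)`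
for batch size `1`. -/
theorem stmt3 {d N : ℕ} (hN : 1 ≤ N)
    (f : Fin N → EuclideanSpace ℝ (Fin d) → ℝ)
    (hdiff : ∀ i, Differentiable ℝ (f i))
    (c : ℝ) (hc : -(1 / 2 : ℝ) < c)
    (hracoga : ∀ x : EuclideanSpace ℝ (Fin d), (∃ i, gradient (f i) x ≠ 0) →
      c * ∑ i : Fin N, ‖gradient (f i) x‖ ^ 2 ≤
        ∑ i : Fin N, ∑ j ∈ Finset.univ.filter (fun j => i < j),
          ⟪gradient (f i) x, gradient (f j) x⟫) :
    ∀ x : EuclideanSpace ℝ (Fin d),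
      (N : ℝ)⁻¹ * ∑ i : Fin N, ‖gradient (f i) x‖ ^ 2
        ≤ ((N : ℝ) / (1 + 2 * c)) *
          ‖gradient (fun y => (N : ℝ)⁻¹ * ∑ i, f i y) x‖ ^ 2 :=
  stmt3_general f hdiff c hc hracoga
end

section
/- Let f = (1/N)∑ f_i be μ-strongly convex with each f_i being L_i-smooth, assume interpolation holds, and let L_(K) be the maximal average smoothness constant over batches of size K. Then the variance of the batch gradient estimator satisfies E[‖∇f(x) − ∇̃_K(x)‖²] ≤ 2(L_(K) − μ)(f(x) − f*) for all x. -/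
/-!
Write `g = ∇f(x)` and `g_B = K⁻¹ ∑_{i ∈ B} ∇fᵢ(x)`. The batch means average to `g`, so the
variance is the mean of `‖g_B‖²` minus `‖g‖²`. Each batch objective `f_B = K⁻¹ ∑_{i ∈ B} fᵢ` is
`L_B`-smooth with `L_B ≤ L_(K)` and, by interpolation, minimized at `x*`; the descent lemma then
gives `‖g_B‖² ≤ 2 L_(K) (f_B(x) - f_B(x*))`, and these gaps average to `f(x) - f*`. The
Polyak–Łojasiewicz inequality `‖g‖² ≥ 2μ (f(x) - f*)` accounts for the `-μ`.
-/

open Finset RealInnerProductSpace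

namespace Finset

variable {ι V : Type*} {k : ℕ}

theorem sum_powersetCard_sum [AddCommMonoid V] (hk : 1 ≤ k) (s : Finset ι) (a : ι → V) :
    ∑ B ∈ s.powersetCard k, ∑ i ∈ B, a i = (#s - 1).choose (k - 1) • ∑ i ∈ s, a i := by
  classical
  rw [sum_comm' (t' := s) (s' := fun i ↦ (s.powersetCard k).filter ({i} ⊆ ·))]
  · rw [smul_sum]
    refine sum_congr rfl fun i hi ↦ ?_
    rw [sum_const, card_filter_powersetCard_subset _ _ _ (singleton_subset_iff.2 hi)
      (by simpa using hk), card_singleton]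
  · intro B i
    simp only [mem_powersetCard, mem_filter, singleton_subset_iff]
    exact ⟨fun ⟨⟨hBs, hB⟩, hi⟩ ↦ ⟨⟨⟨hBs, hB⟩, hi⟩, hBs hi⟩, fun ⟨h, _⟩ ↦ ⟨h.1, h.2⟩⟩

theorem inv_choose_smul_sum_powersetCard [AddCommGroup V] [Module ℝ V] (hk : 1 ≤ k)
    {s : Finset ι} (hks : k ≤ #s) (a : ι → V) :
    ((#s).choose k : ℝ)⁻¹ • ∑ B ∈ s.powersetCard k, (k : ℝ)⁻¹ • ∑ i ∈ B, a i
      = (#s : ℝ)⁻¹ • ∑ i ∈ s, a i := by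
  obtain ⟨n, hn⟩ : ∃ n, #s = n + 1 := ⟨#s - 1, by omega⟩
  obtain ⟨j, rfl⟩ : ∃ j, k = j + 1 := ⟨k - 1, by omega⟩
  have hchoose : ((n + 1 : ℕ) : ℝ) * n.choose j = (n + 1).choose (j + 1) * (j + 1 : ℕ) := by
    exact_mod_cast Nat.add_one_mul_choose_eq n j
  have hpos : ((n + 1).choose (j + 1) : ℝ) ≠ 0 := by
    exact_mod_cast (Nat.choose_pos (by omega)).ne'
  rw [← smul_sum, sum_powersetCard_sum (by omega), ← Nat.cast_smul_eq_nsmul ℝ, smul_smul,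
    smul_smul, hn, Nat.add_sub_cancel, Nat.add_sub_cancel]
  congr 1
  field_simp
  push_cast at hchoose ⊢
  linarith

end Finset

section InnerProductSpace

variable {E : Type*} [NormedAddCommGroup E] [InnerProductSpace ℝ E]

theorem sum_norm_sub_sq_eq_of_sum_eq {β : Type*} (S : Finset β) (u : β → E) {m : E}
    (hm : ∑ b ∈ S, u b = (#S : ℝ) • m) :
    ∑ b ∈ S, ‖m - u b‖ ^ 2 = ∑ b ∈ S, ‖u b‖ ^ 2 - #S * ‖m‖ ^ 2 := by
  simp_rw [norm_sub_sq_real]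
  rw [sum_add_distrib, sum_sub_distrib, sum_const, ← mul_sum, ← inner_sum, hm,
    real_inner_smul_right, real_inner_self_eq_norm_sq, nsmul_eq_mul]
  ring

theorem inv_choose_mul_sum_powersetCard_norm_sub_sq {ι : Type*} {k : ℕ} (hk : 1 ≤ k)
    {s : Finset ι} (hks : k ≤ #s) (a : ι → E) :
    ((#s).choose k : ℝ)⁻¹ * ∑ B ∈ s.powersetCard k,
        ‖(#s : ℝ)⁻¹ • ∑ i ∈ s, a i - (k : ℝ)⁻¹ • ∑ i ∈ B, a i‖ ^ 2
      = ((#s).choose k : ℝ)⁻¹ * ∑ B ∈ s.powersetCard k, ‖(k : ℝ)⁻¹ • ∑ i ∈ B, a i‖ ^ 2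
        - ‖(#s : ℝ)⁻¹ • ∑ i ∈ s, a i‖ ^ 2 := by
  have hpos : ((#s).choose k : ℝ) ≠ 0 := by exact_mod_cast (Nat.choose_pos hks).ne'
  have hmean : ∑ B ∈ s.powersetCard k, (k : ℝ)⁻¹ • ∑ i ∈ B, a i
      = (#(s.powersetCard k) : ℝ) • ((#s : ℝ)⁻¹ • ∑ i ∈ s, a i) := by
    rw [← inv_choose_smul_sum_powersetCard hk hks, card_powersetCard, smul_inv_smul₀ hpos]
  rw [sum_norm_sub_sq_eq_of_sum_eq _ _ hmean, card_powersetCard, mul_sub,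
    inv_mul_cancel_left₀ hpos]

variable [CompleteSpace E]

theorem HasGradientAt.hasDerivAt_comp_add_smul {h : E → ℝ} {g x v : E} {t : ℝ}
    (hh : HasGradientAt h g (x + t • v)) :
    HasDerivAt (fun s : ℝ ↦ h (x + s • v)) ⟪g, v⟫ t := by
  have hline : HasDerivAt (fun s : ℝ ↦ x + s • v) v t := by
    simpa using ((hasDerivAt_id t).smul_const v).const_add x
  have := hh.hasFDerivAt.comp_hasDerivAt t hline
  rwa [InnerProductSpace.toDual_apply_apply] at this

theorem le_add_inner_gradient_add_sq {h : E → ℝ} {L : ℝ} (hh : Differentiable ℝ h)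
    (hL : ∀ x y, ‖gradient h x - gradient h y‖ ≤ L * ‖x - y‖) (x y : E) :
    h y ≤ h x + ⟪gradient h x, y - x⟫ + L / 2 * ‖y - x‖ ^ 2 := by
  set v := y - x
  set ψ : ℝ → ℝ := fun t ↦ h (x + t • v) - t * ⟪gradient h x, v⟫ - L / 2 * t ^ 2 * ‖v‖ ^ 2
  have hψ' : ∀ t, HasDerivAt ψ
      (⟪gradient h (x + t • v) - gradient h x, v⟫ - L * t * ‖v‖ ^ 2) t := by
    intro t
    refine ((((hh (x + t • v)).hasGradientAt.hasDerivAt_comp_add_smul).sub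
      ((hasDerivAt_id t).mul_const ⟪gradient h x, v⟫)).sub
      (((hasDerivAt_pow 2 t).const_mul (L / 2)).mul_const (‖v‖ ^ 2))).congr_deriv ?_
    rw [inner_sub_left]
    simp only [Nat.cast_ofNat]
    ring
  have hanti : AntitoneOn ψ (Set.Ici 0) := by
    refine antitoneOn_of_hasDerivWithinAt_nonpos (convex_Ici 0)
      (fun t _ ↦ (hψ' t).continuousAt.continuousWithinAt) (fun t _ ↦ (hψ' t).hasDerivWithinAt) ?_
    intro t ht
    rw [interior_Ici, Set.mem_Ioi] at ht
    have hlip : ‖gradient h (x + t • v) - gradient h x‖ ≤ L * (t * ‖v‖) := by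
      simpa [norm_smul, abs_of_pos ht] using hL (x + t • v) x
    nlinarith [real_inner_le_norm (gradient h (x + t • v) - gradient h x) v, norm_nonneg v]
  have := hanti Set.self_mem_Ici (Set.mem_Ici.2 zero_le_one) zero_le_one
  simp only [ψ, v, one_smul, zero_smul, add_zero, add_sub_cancel, one_mul, one_pow, mul_one,
    zero_mul, sub_zero, ne_eq, OfNat.ofNat_ne_zero, not_false_eq_true, zero_pow, mul_zero] at this
  linarith

theorem norm_gradient_sq_le_of_forall_le {h : E → ℝ} {L : ℝ} (hh : Differentiable ℝ h)
    (hL : ∀ x y, ‖gradient h x - gradient h y‖ ≤ L * ‖x - y‖) {xs : E} (hxs : ∀ y, h xs ≤ h y)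
    (x : E) : ‖gradient h x‖ ^ 2 ≤ 2 * L * (h x - h xs) := by
  have hmin : IsLocalMin h xs := Filter.Eventually.of_forall hxs
  have hgxs : gradient h xs = 0 := by simp [gradient, hmin.fderiv_eq_zero]
  have hgrad : ‖gradient h x‖ ≤ L * ‖x - xs‖ := by simpa [hgxs] using hL x xs
  rcases eq_or_ne (gradient h x) 0 with hg | hg
  · rcases eq_or_ne x xs with rfl | hx
    · simp [hg]
    have hL0 : 0 ≤ L := nonneg_of_mul_nonneg_left ((norm_nonneg _).trans hgrad)
      (norm_pos_iff.2 (sub_ne_zero.2 hx))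
    simp only [hg, norm_zero]
    nlinarith [hxs x]
  have hL0 : 0 < L := pos_of_mul_pos_left ((norm_pos_iff.2 hg).trans_le hgrad) (norm_nonneg _)
  -- a gradient step of length `1 / L` lowers `h` by at least `‖∇h x‖² / (2L)`
  have hstep := (hxs _).trans (le_add_inner_gradient_add_sq hh hL x (x - L⁻¹ • gradient h x))
  rw [sub_sub_cancel_left, inner_neg_right, real_inner_smul_right, real_inner_self_eq_norm_sq,
    norm_neg, norm_smul, Real.norm_of_nonneg (inv_nonneg.2 hL0.le)] at hstep
  field_simp at hstep
  nlinarith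

theorem StrongConvexOn.add_inner_add_sq_le {F : E → ℝ} {μ : ℝ} {g x : E}
    (hF : StrongConvexOn Set.univ μ F) (hg : HasGradientAt F g x) (y : E) :
    F x + ⟪g, y - x⟫ + μ / 2 * ‖y - x‖ ^ 2 ≤ F y := by
  set v := y - x
  -- `F - (μ/2)‖·‖²` is convex, hence so is its restriction `φ` to the line through `x` and `y`
  set φ : ℝ → ℝ := fun t ↦ F (x + t • v) - μ / 2 * ‖x + t • v‖ ^ 2
  have hconv : ConvexOn ℝ Set.univ φ := by
    have h := (strongConvexOn_iff_convex.1 hF).comp_affineMap (AffineMap.lineMap x y)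
    rw [Set.preimage_univ] at h
    have hφ : φ = (fun z ↦ F z - μ / 2 * ‖z‖ ^ 2) ∘ AffineMap.lineMap x y := by
      funext t
      simp [φ, v, AffineMap.lineMap_apply_module', add_comm]
    rwa [hφ]
  have hφ' : HasDerivAt φ (⟪g, v⟫ - μ * ⟪x, v⟫) 0 := by
    have hline : HasDerivAt (fun t : ℝ ↦ x + t • v) v 0 := by
      simpa using ((hasDerivAt_id (0 : ℝ)).smul_const v).const_add x
    have hg0 : HasGradientAt F g (x + (0 : ℝ) • v) := by rwa [zero_smul, add_zero]
    refine (hg0.hasDerivAt_comp_add_smul.sub (hline.norm_sq.const_mul (μ / 2))).congr_deriv ?_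
    rw [zero_smul, add_zero]
    ring
  have := hconv.le_slope_of_hasDerivAt (Set.mem_univ 0) (Set.mem_univ 1) zero_lt_one hφ'
  simp only [slope_def_field, φ, one_smul, zero_smul, add_zero, sub_zero, div_one,
    norm_add_sq_real, inner_zero_right, norm_zero] at this
  rw [show x + v = y from add_sub_cancel x y] at this
  nlinarith [real_inner_comm x v]

theorem StrongConvexOn.mul_sub_le_norm_sq {F : E → ℝ} {μ : ℝ} (hμ : 0 < μ) {g x : E}
    (hF : StrongConvexOn Set.univ μ F) (hg : HasGradientAt F g x) (y : E) :
    2 * μ * (F x - F y) ≤ ‖g‖ ^ 2 := by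
  have hsq : ‖g + μ • (y - x)‖ ^ 2 = ‖g‖ ^ 2 + 2 * μ * ⟪g, y - x⟫ + μ ^ 2 * ‖y - x‖ ^ 2 := by
    rw [norm_add_sq_real, norm_smul, real_inner_smul_right, Real.norm_of_nonneg hμ.le]
    ring
  nlinarith [sq_nonneg ‖g + μ • (y - x)‖, mul_le_mul_of_nonneg_left (hF.add_inner_add_sq_le hg y)
    (by positivity : 0 ≤ 2 * μ)]

theorem hasGradientAt_const_mul_sum {ι : Type*} {B : Finset ι} {f : ι → E → ℝ} {x : E}
    (hf : ∀ i ∈ B, DifferentiableAt ℝ (f i) x) (c : ℝ) :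
    HasGradientAt (fun y ↦ c * ∑ i ∈ B, f i y) (c • ∑ i ∈ B, gradient (f i) x) x := by
  rw [hasGradientAt_iff_hasFDerivAt, map_smul, map_sum]
  exact (HasFDerivAt.fun_sum fun i hi ↦ (hf i hi).hasGradientAt.hasFDerivAt).const_mul c

theorem norm_smul_sum_gradient_sq_le {ι : Type*} {B : Finset ι} {f : ι → E → ℝ} {L : ι → ℝ}
    (hf : ∀ i ∈ B, Differentiable ℝ (f i))
    (hL : ∀ i ∈ B, ∀ x y, ‖gradient (f i) x - gradient (f i) y‖ ≤ L i * ‖x - y‖)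
    {xs : E} (hxs : ∀ i ∈ B, ∀ y, f i xs ≤ f i y) {c : ℝ} (hc : 0 ≤ c) (x : E) :
    ‖c • ∑ i ∈ B, gradient (f i) x‖ ^ 2
      ≤ 2 * (c * ∑ i ∈ B, L i) * (c * ∑ i ∈ B, (f i x - f i xs)) := by
  set h : E → ℝ := fun y ↦ c * ∑ i ∈ B, f i y
  have hgrad : ∀ z, gradient h z = c • ∑ i ∈ B, gradient (f i) z := fun z ↦
    (hasGradientAt_const_mul_sum (fun i hi ↦ (hf i hi).differentiableAt) c).gradient
  have hdiff : Differentiable ℝ h := fun z ↦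
    (hasGradientAt_const_mul_sum (fun i hi ↦ (hf i hi).differentiableAt) c).differentiableAt
  have hlip : ∀ z w, ‖gradient h z - gradient h w‖ ≤ (c * ∑ i ∈ B, L i) * ‖z - w‖ := by
    intro z w
    rw [hgrad, hgrad, ← smul_sub, ← sum_sub_distrib, norm_smul, Real.norm_of_nonneg hc,
      mul_assoc, sum_mul]
    gcongr
    exact (norm_sum_le _ _).trans (sum_le_sum fun i hi ↦ hL i hi z w)
  have hmin : ∀ y, h xs ≤ h y := fun y ↦
    mul_le_mul_of_nonneg_left (sum_le_sum fun i hi ↦ hxs i hi y) hc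
  have := norm_gradient_sq_le_of_forall_le hdiff hlip hmin x
  rw [hgrad] at this
  simpa only [h, sum_sub_distrib, mul_sub] using this

end InnerProductSpace

theorem stmt10_general {d N : ℕ} (K : ℕ) (hK : 1 ≤ K) (hKN : K ≤ N)
    (f : Fin N → EuclideanSpace ℝ (Fin d) → ℝ)
    (L : Fin N → ℝ) (μ : ℝ) (hμ : 0 < μ)
    (hdiff : ∀ i, Differentiable ℝ (f i))
    (hlip : ∀ i, ∀ x y : EuclideanSpace ℝ (Fin d),
      ‖gradient (f i) x - gradient (f i) y‖ ≤ L i * ‖x - y‖)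
    (hsc : StrongConvexOn Set.univ μ (fun y : EuclideanSpace ℝ (Fin d) =>
      (N : ℝ)⁻¹ * ∑ i, f i y))
    (xstar : EuclideanSpace ℝ (Fin d))
    (hinterp : ∀ i, ∀ y, f i xstar ≤ f i y)
    (LK : ℝ)
    (hLK : IsGreatest
      {l : ℝ | ∃ B ∈ Finset.powersetCard K (Finset.univ : Finset (Fin N)),
        l = (K : ℝ)⁻¹ * ∑ i ∈ B, L i} LK) :
    ∀ x : EuclideanSpace ℝ (Fin d),
      ((N.choose K : ℝ))⁻¹ *
          ∑ B ∈ Finset.powersetCard K (Finset.univ : Finset (Fin N)),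
            ‖gradient (fun y => (N : ℝ)⁻¹ * ∑ i, f i y) x -
              (K : ℝ)⁻¹ • ∑ i ∈ B, gradient (f i) x‖ ^ 2
        ≤ 2 * (LK - μ) * ((N : ℝ)⁻¹ * ∑ i, f i x - (N : ℝ)⁻¹ * ∑ i, f i xstar) := by
  intro x
  have hKN' : K ≤ #(univ : Finset (Fin N)) := by simpa using hKN
  have hgrad := hasGradientAt_const_mul_sum (B := univ) (fun i _ ↦ hdiff i x) (N : ℝ)⁻¹
  have hvar := inv_choose_mul_sum_powersetCard_norm_sub_sq hK hKN' fun i ↦ gradient (f i) x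
  have hgap := inv_choose_smul_sum_powersetCard hK hKN' fun i ↦ f i x - f i xstar
  simp only [card_univ, Fintype.card_fin, smul_eq_mul] at hvar hgap
  have hbatch : ∀ B ∈ powersetCard K univ, ‖(K : ℝ)⁻¹ • ∑ i ∈ B, gradient (f i) x‖ ^ 2
      ≤ 2 * LK * ((K : ℝ)⁻¹ * ∑ i ∈ B, (f i x - f i xstar)) := fun B hB ↦
    (norm_smul_sum_gradient_sq_le (fun i _ ↦ hdiff i) (fun i _ ↦ hlip i)
      (fun i _ ↦ hinterp i) (by positivity) x).trans <| by
      gcongr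
      · exact mul_nonneg (by positivity) (sum_nonneg fun i _ ↦ sub_nonneg.2 (hinterp i x))
      · exact hLK.2 ⟨B, hB, rfl⟩
  have hPL := hsc.mul_sub_le_norm_sq hμ hgrad xstar
  rw [hgrad.gradient, hvar]
  calc _ ≤ ((N.choose K : ℝ))⁻¹ * ∑ B ∈ powersetCard K univ,
          2 * LK * ((K : ℝ)⁻¹ * ∑ i ∈ B, (f i x - f i xstar))
        - 2 * μ * ((N : ℝ)⁻¹ * ∑ i, f i x - (N : ℝ)⁻¹ * ∑ i, f i xstar) :=
        sub_le_sub (mul_le_mul_of_nonneg_left (sum_le_sum hbatch) (by positivity)) hPL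
    _ = _ := by rw [← mul_sum, mul_left_comm, hgap, sum_sub_distrib, mul_sub]; ring

/-- Variance transfer: if `f = (1/N) ∑ fᵢ` is `μ`-strongly convex, each `fᵢ` is
`Lᵢ`-smooth and interpolation holds, then the variance of the batch gradient estimator
is bounded by `2 (L_(K) - μ)(f(x) - f*)`. -/
theorem stmt10 {d N : ℕ} (hN : 1 ≤ N) (K : ℕ) (hK : 1 ≤ K) (hKN : K ≤ N)
    (f : Fin N → EuclideanSpace ℝ (Fin d) → ℝ)
    (L : Fin N → ℝ) (μ : ℝ) (hμ : 0 < μ)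
    (hdiff : ∀ i, Differentiable ℝ (f i))
    (hlip : ∀ i, ∀ x y : EuclideanSpace ℝ (Fin d),
      ‖gradient (f i) x - gradient (f i) y‖ ≤ L i * ‖x - y‖)
    (hsc : StrongConvexOn Set.univ μ (fun y : EuclideanSpace ℝ (Fin d) =>
      (N : ℝ)⁻¹ * ∑ i, f i y))
    (xstar : EuclideanSpace ℝ (Fin d))
    (hminf : ∀ y, (N : ℝ)⁻¹ * ∑ i, f i xstar ≤ (N : ℝ)⁻¹ * ∑ i, f i y)
    (hinterp : ∀ i, ∀ y, f i xstar ≤ f i y)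
    (LK : ℝ)
    (hLK : IsGreatest
      {l : ℝ | ∃ B ∈ Finset.powersetCard K (Finset.univ : Finset (Fin N)),
        l = (K : ℝ)⁻¹ * ∑ i ∈ B, L i} LK) :
    ∀ x : EuclideanSpace ℝ (Fin d),
      ((N.choose K : ℝ))⁻¹ *
          ∑ B ∈ Finset.powersetCard K (Finset.univ : Finset (Fin N)),
            ‖gradient (fun y => (N : ℝ)⁻¹ * ∑ i, f i y) x -
              (K : ℝ)⁻¹ • ∑ i ∈ B, gradient (f i) x‖ ^ 2
        ≤ 2 * (LK - μ) * ((N : ℝ)⁻¹ * ∑ i, f i x - (N : ℝ)⁻¹ * ∑ i, f i xstar) :=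
  stmt10_general K hK hKN f L μ hμ hdiff hlip hsc xstar hinterp LK hLK
end
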